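/- Assume there exists at least one Mather measure. Then the family 𝓕 is uniformly bounded from above: for every x ∈ M and every i ∈ {1,…,m}, sup{ w_i(x) : w ∈ 𝓕 } < +∞. -/

import Mathlib

open scoped RealInnerProductSpace
open Filter MeasureTheory Set

noncomputable section

/-- `ℝ^N` with the Euclidean structure; `ℤ^N`-periodic functions on it represent
functions on the flat torus `M = ℝ^N/ℤ^N`. -/
abbrev Euc (N : ℕ) : Type := EuclideanSpace ℝ (Fin N)

/-- `f : ℝ^N → ℝ` is `ℤ^N`-periodic, i.e. it descends to the flat torus `M = ℝ^N/ℤ^N`. -/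
def ZPeriodic {N : ℕ} (f : Euc N → ℝ) : Prop :=
  ∀ (x : Euc N) (k : Fin N → ℤ),
    f (x + (WithLp.equiv 2 (Fin N → ℝ)).symm (fun i => (k i : ℝ))) = f x

/-- `p` belongs to the superdifferential `D⁺u(x)`, i.e.
`limsup_{y→x} (u(y) − u(x) − ⟨p, y−x⟩)/|y−x| ≤ 0`. -/
def InSuperDiff {N : ℕ} (u : Euc N → ℝ) (x p : Euc N) : Prop :=
  ∀ ε > 0, ∃ δ > 0, ∀ y : Euc N, dist y x < δ →
    u y - u x - ⟪p, y - x⟫ ≤ ε * dist y x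

/-- `p` belongs to the subdifferential `D⁻u(x)`, i.e.
`liminf_{y→x} (u(y) − u(x) − ⟨p, y−x⟩)/|y−x| ≥ 0`. -/
def InSubDiff {N : ℕ} (u : Euc N → ℝ) (x p : Euc N) : Prop :=
  ∀ ε > 0, ∃ δ > 0, ∀ y : Euc N, dist y x < δ →
    -(ε * dist y x) ≤ u y - u x - ⟪p, y - x⟫

/-- `u` is a continuous viscosity subsolution of `(B + λ Id)u + H(x,Du) = c𝟙` on the torus. -/
def IsSubsol {N m : ℕ} (H : Fin m → Euc N → Euc N → ℝ) (B : Matrix (Fin m) (Fin m) ℝ)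
    (lam c : ℝ) (u : Fin m → Euc N → ℝ) : Prop :=
  (∀ i, Continuous (u i)) ∧ (∀ i, ZPeriodic (u i)) ∧
  ∀ (x : Euc N) (i : Fin m) (p : Euc N), InSuperDiff (u i) x p →
    H i x p + (B.mulVec (fun j => u j x) i + lam * u i x) ≤ c

/-- `u` is a continuous viscosity supersolution of `(B + λ Id)u + H(x,Du) = c𝟙` on the torus. -/
def IsSupersol {N m : ℕ} (H : Fin m → Euc N → Euc N → ℝ) (B : Matrix (Fin m) (Fin m) ℝ)
    (lam c : ℝ) (u : Fin m → Euc N → ℝ) : Prop :=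
  (∀ i, Continuous (u i)) ∧ (∀ i, ZPeriodic (u i)) ∧
  ∀ (x : Euc N) (i : Fin m) (p : Euc N), InSubDiff (u i) x p →
    c ≤ H i x p + (B.mulVec (fun j => u j x) i + lam * u i x)

/-- `u` is a continuous viscosity solution of `(B + λ Id)u + H(x,Du) = c𝟙` on the torus. -/
def IsSol {N m : ℕ} (H : Fin m → Euc N → Euc N → ℝ) (B : Matrix (Fin m) (Fin m) ℝ)
    (lam c : ℝ) (u : Fin m → Euc N → ℝ) : Prop :=
  IsSubsol H B lam c u ∧ IsSupersol H B lam c u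

/-- The critical value `c(H)`: the infimum of the `c` for which the system
`Bu + H(x,Du) = c𝟙` admits a continuous viscosity subsolution. -/
def critVal {N m : ℕ} (H : Fin m → Euc N → Euc N → ℝ) (B : Matrix (Fin m) (Fin m) ℝ) : ℝ :=
  sInf {c : ℝ | ∃ u, IsSubsol H B 0 c u}

/-- The standing assumptions: each `H i` is continuous, `ℤ^N`-periodic in `x`, convex in `p` and
pinched between `α(|p|)` and `β(|p|)`; `B` has nonpositive off-diagonal entries, zero row sums
and is irreducible. -/
def Standing {N m : ℕ} (H : Fin m → Euc N → Euc N → ℝ) (B : Matrix (Fin m) (Fin m) ℝ)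
    (α β : ℝ → ℝ) : Prop :=
  (∀ i, Continuous fun q : Euc N × Euc N => H i q.1 q.2) ∧
  (∀ i p, ZPeriodic fun x => H i x p) ∧
  (∀ i x, ConvexOn ℝ Set.univ (H i x)) ∧
  (∀ i x p, α ‖p‖ ≤ H i x p ∧ H i x p ≤ β ‖p‖) ∧
  (∀ i j, i ≠ j → B i j ≤ 0) ∧
  (∀ i, ∑ j, B i j = 0) ∧
  (∀ I : Finset (Fin m), I.Nonempty → I ≠ Finset.univ → ∃ i ∈ I, ∃ j, j ∉ I ∧ B i j ≠ 0)

/-- The Lagrangian associated with `H i` by Legendre–Fenchel duality: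
`L_i(x,v) = sup_p (⟨p,v⟩ − H_i(x,p))`. -/
def Lag {N m : ℕ} (H : Fin m → Euc N → Euc N → ℝ) (i : Fin m) (x v : Euc N) : ℝ :=
  ⨆ p : Euc N, (⟪p, v⟫ - H i x p)

/-- The phase space `M × ℝ^N × {1,…,m}` (with `M` represented through periodic functions). -/
abbrev Phase (N m : ℕ) : Type := Euc N × Euc N × Fin m

/-- A `C¹` function `φ = (φ_1,…,φ_m) : M → ℝ^m` on the torus. -/
def IsC1Per {N m : ℕ} (φ : Fin m → Euc N → ℝ) : Prop :=
  (∀ i, ContDiff ℝ 1 (φ i)) ∧ (∀ i, ZPeriodic (φ i))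

/-- A closed measure: a Borel probability measure `μ` on `M × ℝ^N × {1,…,m}` with
`∫ |v| dμ < ∞` and `∫ ((Bφ(x))_i + ⟨Dφ_i(x), v⟩) dμ(x,v,i) = 0` for every `C¹` map
`φ : M → ℝ^m`. -/
def IsClosedMeas {N m : ℕ} (B : Matrix (Fin m) (Fin m) ℝ) (μ : Measure (Phase N m)) : Prop :=
  IsProbabilityMeasure μ ∧
  Integrable (fun z : Phase N m => ‖z.2.1‖) μ ∧
  ∀ φ : Fin m → Euc N → ℝ, IsC1Per φ →
    ∫ z : Phase N m,
      (B.mulVec (fun j => φ j z.1) z.2.2 + ⟪gradient (φ z.2.2) z.1, z.2.1⟫) ∂μ = 0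

/-- A Mather measure: a closed measure minimizing the action, i.e. with
`∫ L_i(x,v) dμ(x,v,i) = −c(H)`. -/
def IsMather {N m : ℕ} (H : Fin m → Euc N → Euc N → ℝ) (B : Matrix (Fin m) (Fin m) ℝ)
    (μ : Measure (Phase N m)) : Prop :=
  IsClosedMeas B μ ∧ Integrable (fun z : Phase N m => Lag H z.2.2 z.1 z.2.1) μ ∧
  ∫ z : Phase N m, Lag H z.2.2 z.1 z.2.1 ∂μ = -critVal H B

/-- The family `𝓕` of continuous viscosity subsolutions `w` of the critical system whose
integral against every Mather measure is nonpositive. -/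
def Fam {N m : ℕ} (H : Fin m → Euc N → Euc N → ℝ) (B : Matrix (Fin m) (Fin m) ℝ) :
    Set (Fin m → Euc N → ℝ) :=
  {w | IsSubsol H B 0 (critVal H B) w ∧
       ∀ μ : Measure (Phase N m), IsMather H B μ → ∫ z : Phase N m, w z.2.2 z.1 ∂μ ≤ 0}

/-- The candidate limit `u⁰_i(x) = sup{ w_i(x) : w ∈ 𝓕 }`. -/
def uZero {N m : ℕ} (H : Fin m → Euc N → Euc N → ℝ) (B : Matrix (Fin m) (Fin m) ℝ) :
    Fin m → Euc N → ℝ :=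
  fun i x => sSup {r | ∃ w ∈ Fam H B, r = w i x}

section Helpers

variable {N : ℕ}

/-- Embed an integer vector into `Euc N`. -/
def intVec {N : ℕ} (k : Fin N → ℤ) : Euc N :=
  (WithLp.equiv 2 (Fin N → ℝ)).symm (fun i => (k i : ℝ))

lemma intVec_apply (k : Fin N → ℤ) (j : Fin N) : intVec k j = (k j : ℝ) := rfl

/-- Any point is `ℤ^N`-equivalent to a point in the ball of radius `√N`. -/
lemma exists_rep (x : Euc N) : ∃ k : Fin N → ℤ, ‖x + intVec k‖ ≤ Real.sqrt N := by
  refine ⟨fun j => -⌊x j⌋, ?_⟩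
  have hco : ∀ j, ‖(x + intVec fun j => -⌊x j⌋) j‖ ^ 2 ≤ 1 := by
    intro j
    have : (x + intVec fun j => -⌊x j⌋) j = Int.fract (x j) := by
      have : (x + intVec fun j => -⌊x j⌋) j = x j + ((-⌊x j⌋ : ℤ) : ℝ) := rfl
      rw [this, Int.fract]
      push_cast
      ring
    rw [this]
    have h1 := Int.fract_nonneg (x j)
    have h2 := Int.fract_lt_one (x j)
    have : |Int.fract (x j)| ≤ 1 := by rw [abs_of_nonneg h1]; linarith
    calc ‖Int.fract (x j)‖ ^ 2 = |Int.fract (x j)| ^ 2 := rfl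
      _ ≤ 1 ^ 2 := by apply pow_le_pow_left₀ (abs_nonneg _) this
      _ = 1 := one_pow 2
  rw [EuclideanSpace.norm_eq]
  have : ∑ j, ‖(x + intVec fun j => -⌊x j⌋) j‖ ^ 2 ≤ (N : ℝ) := by
    calc ∑ j, ‖(x + intVec fun j => -⌊x j⌋) j‖ ^ 2 ≤ ∑ _j : Fin N, (1:ℝ) :=
          Finset.sum_le_sum (fun j _ => hco j)
      _ = N := by simp
  exact Real.sqrt_le_sqrt this

/-- A continuous periodic function is bounded. -/
lemma bdd_of_periodic (f : Euc N → ℝ) (hc : Continuous f) (hp : ZPeriodic f) :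
    ∃ C, 0 ≤ C ∧ ∀ x, |f x| ≤ C := by
  obtain ⟨C, hC⟩ := (isCompact_closedBall (0 : Euc N) (Real.sqrt N)).exists_bound_of_continuousOn
    hc.continuousOn
  refine ⟨max C 0, le_max_right _ _, fun x => ?_⟩
  obtain ⟨k, hk⟩ := exists_rep x
  have : f (x + intVec k) = f x := hp x k
  rw [← this]
  have := hC (x + intVec k) (by simpa [Metric.mem_closedBall, dist_eq_norm] using hk)
  calc |f (x + intVec k)| = ‖f (x + intVec k)‖ := rfl
    _ ≤ C := this
    _ ≤ max C 0 := le_max_left _ _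

/-- Periodic dist bound: for any `x y` there is a shift of `y` within `√N` of `x`. -/
lemma exists_close_rep (x y : Euc N) : ∃ k : Fin N → ℤ, ‖(y + intVec k) - x‖ ≤ Real.sqrt N := by
  obtain ⟨k, hk⟩ := exists_rep (y - x)
  refine ⟨k, ?_⟩
  have : (y + intVec k) - x = (y - x) + intVec k := by abel
  rw [this]; exact hk

end Helpers
section Calculus

variable {N : ℕ}

/-- If `u - φ` has a global max at `x₀` and `φ` is differentiable at `x₀` with gradient `p`,
then `p` is in the superdifferential of `u` at `x₀`. -/
lemma superdiff_of_max (u φ : Euc N → ℝ) (x₀ p : Euc N) (L : Euc N →L[ℝ] ℝ)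
    (hφ : HasFDerivAt φ L x₀) (hL : ∀ v, L v = ⟪p, v⟫)
    (hmax : ∀ y, u y - φ y ≤ u x₀ - φ x₀) : InSuperDiff u x₀ p := by
  intro ε hε
  have h := (hφ.isLittleO).def hε
  rw [Metric.eventually_nhds_iff] at h
  obtain ⟨δ, hδ, hh⟩ := h
  refine ⟨δ, hδ, fun y hy => ?_⟩
  have h1 := hh hy
  have h2 := hmax y
  have h4 : φ y - φ x₀ - L (y - x₀) ≤ ε * ‖y - x₀‖ := by
    calc φ y - φ x₀ - L (y - x₀) ≤ ‖φ y - φ x₀ - L (y - x₀)‖ := le_abs_self _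
      _ ≤ ε * ‖y - x₀‖ := h1
  rw [hL] at h4
  rw [dist_eq_norm]
  linarith

/-- Points with nonempty superdifferential are dense (for continuous bounded functions). -/
lemma dense_superdiff (u : Euc N → ℝ) (hc : Continuous u) (Cw : ℝ) (hCw : ∀ x, |u x| ≤ Cw)
    (x₀ : Euc N) (r : ℝ) (hr : 0 < r) : ∃ y p, dist y x₀ < r ∧ InSuperDiff u y p := by
  have hCw0 : 0 ≤ Cw := le_trans (abs_nonneg _) (hCw x₀)
  set K := (2 * Cw + 1) / r ^ 2 with hK
  have hKpos : 0 < K := by positivity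
  set F := fun y : Euc N => u y - K * ‖y - x₀‖ ^ 2 with hF
  have hFc : Continuous F :=
    hc.sub (continuous_const.mul (((continuous_id.sub continuous_const).norm).pow 2))
  obtain ⟨y₀, hy₀mem, hy₀⟩ := (isCompact_closedBall x₀ r).exists_isMaxOn
    ⟨x₀, by simp [hr.le]⟩ hFc.continuousOn
  have hFx₀ : F x₀ ≤ F y₀ := hy₀ (by simp [hr.le])
  have hFx₀' : F x₀ = u x₀ := by simp [hF]
  have hrad : ‖y₀ - x₀‖ ^ 2 < r ^ 2 := by
    have h1 : K * ‖y₀ - x₀‖ ^ 2 ≤ u y₀ - u x₀ := by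
      rw [hFx₀'] at hFx₀; simp only [hF] at hFx₀; linarith
    have h2 : u y₀ - u x₀ ≤ 2 * Cw := by
      have := hCw y₀; have := hCw x₀
      have := abs_le.mp (hCw y₀); have := abs_le.mp (hCw x₀); linarith [this.1, this.2]
    have h3 : K * r ^ 2 = 2 * Cw + 1 := by
      rw [hK]; field_simp
    nlinarith
  have hrad' : ‖y₀ - x₀‖ < r := by
    nlinarith [norm_nonneg (y₀ - x₀)]
  refine ⟨y₀, (2 * K) • (y₀ - x₀), by rwa [dist_eq_norm], ?_⟩
  intro ε hε
  refine ⟨min (ε / K) (r - ‖y₀ - x₀‖), lt_min (by positivity) (by linarith), fun y hy => ?_⟩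
  have hy1 : dist y y₀ < ε / K := lt_of_lt_of_le hy (min_le_left _ _)
  have hy2 : dist y y₀ < r - ‖y₀ - x₀‖ := lt_of_lt_of_le hy (min_le_right _ _)
  have hymem : y ∈ Metric.closedBall x₀ r := by
    rw [Metric.mem_closedBall]
    calc dist y x₀ ≤ dist y y₀ + dist y₀ x₀ := dist_triangle _ _ _
      _ ≤ (r - ‖y₀ - x₀‖) + ‖y₀ - x₀‖ := by
          rw [dist_eq_norm y₀ x₀]; linarith
      _ = r := by ring
  have h1 : F y ≤ F y₀ := hy₀ hymem
  have hexp : ‖y - x₀‖ ^ 2 = ‖y - y₀‖ ^ 2 + 2 * ⟪y₀ - x₀, y - y₀⟫ + ‖y₀ - x₀‖ ^ 2 := by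
    have hsplit : y - x₀ = (y - y₀) + (y₀ - x₀) := by abel
    rw [hsplit, norm_add_sq_real, real_inner_comm]
  have hip : ⟪(2 * K) • (y₀ - x₀), y - y₀⟫ = 2 * K * ⟪y₀ - x₀, y - y₀⟫ :=
    real_inner_smul_left _ _ _
  have h2 : u y - u y₀ ≤ K * (‖y - x₀‖ ^ 2 - ‖y₀ - x₀‖ ^ 2) := by
    simp only [hF] at h1; linarith
  have hd : dist y y₀ = ‖y - y₀‖ := dist_eq_norm _ _
  have hsmall : ‖y - y₀‖ ≤ ε / K := by rw [← hd]; exact hy1.le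
  have hfin : u y - u y₀ - ⟪(2 * K) • (y₀ - x₀), y - y₀⟫ ≤ K * ‖y - y₀‖ ^ 2 := by
    rw [hip]; rw [hexp] at h2; linarith
  have : K * ‖y - y₀‖ ^ 2 ≤ ε * ‖y - y₀‖ := by
    have hn : 0 ≤ ‖y - y₀‖ := norm_nonneg _
    have : K * ‖y - y₀‖ ≤ ε := by
      rw [← le_div_iff₀' hKpos]; exact hsmall
    nlinarith
  rw [hd]
  linarith

end Calculus
section Lip
set_option maxHeartbeats 1000000

variable {N : ℕ}

/-- A continuous bounded function whose superdifferential elements all have norm `≤ κ`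
satisfies a Lipschitz-type estimate with constant `κ + 1`. -/
lemma lip_of_superdiff_bound (u : Euc N → ℝ) (hc : Continuous u) (Cw : ℝ) (hCw : ∀ x, |u x| ≤ Cw)
    (κ : ℝ) (hκ : 0 ≤ κ) (hbd : ∀ x p, InSuperDiff u x p → ‖p‖ ≤ κ) (y z : Euc N) :
    u y - u z ≤ (κ + 1) * ‖y - z‖ := by
  set C := κ + 1 with hCdef
  have hCpos : 0 < C := by simp only [hCdef]; linarith
  clear_value C
  have hA : (0:ℝ) < 1 + C + ‖y - z‖ ^ 2 := by positivity
  have key : ∀ ε > 0, u y - u z ≤ C * ‖y - z‖ + ε * (1 + C + ‖y - z‖ ^ 2) := by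
    intro ε hε
    obtain ⟨δ₁, hδ₁, hcont⟩ := Metric.continuous_iff.mp hc z ε hε
    set δ := min (δ₁ / (κ + 1)) ε with hδdef
    have hδpos : 0 < δ := lt_min (by positivity) hε
    set q := fun x : Euc N => ‖x - z‖ ^ 2 with hq
    have hq0 : ∀ x, 0 ≤ q x := fun x => sq_nonneg _
    set φ := fun x : Euc N => C * Real.sqrt (q x + δ ^ 2) + δ * q x with hφ
    have hqc : Continuous q := ((continuous_id.sub continuous_const).norm).pow 2
    have hφc : Continuous φ :=
      (continuous_const.mul ((hqc.add continuous_const).sqrt)).add (continuous_const.mul hqc)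
    have hφnonneg : ∀ x, 0 ≤ φ x := fun x =>
      add_nonneg (mul_nonneg hCpos.le (Real.sqrt_nonneg _)) (mul_nonneg hδpos.le (hq0 x))
    have hφlb : ∀ x, C * ‖x - z‖ ≤ φ x := by
      intro x
      have h1 : ‖x - z‖ ≤ Real.sqrt (q x + δ ^ 2) := by
        have h2 : ‖x - z‖ ^ 2 ≤ q x + δ ^ 2 := by simp only [hq]; nlinarith [sq_nonneg δ]
        calc ‖x - z‖ = Real.sqrt (‖x - z‖ ^ 2) := (Real.sqrt_sq (norm_nonneg _)).symm
          _ ≤ Real.sqrt (q x + δ ^ 2) := Real.sqrt_le_sqrt h2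
      have := mul_le_mul_of_nonneg_left h1 hCpos.le
      have := mul_nonneg hδpos.le (hq0 x)
      simp only [hφ]; linarith
    set g := fun x : Euc N => u x - φ x with hg
    obtain ⟨x₀, hmax⟩ : ∃ x₀, ∀ x, g x ≤ g x₀ := by
      have hCw0 : 0 ≤ Cw := le_trans (abs_nonneg _) (hCw z)
      set R := max ((2 * Cw + C * δ) / C) 0 with hR
      obtain ⟨x₀, hmem, hmax⟩ := (isCompact_closedBall z R).exists_isMaxOn
        ⟨z, by simp [hR]⟩ (hc.sub hφc).continuousOn
      refine ⟨x₀, fun x => ?_⟩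
      by_cases hx : x ∈ Metric.closedBall z R
      · exact hmax hx
      · have hdist : R < dist x z := by
          simp only [Metric.mem_closedBall, not_le] at hx; exact hx
        have hub : u x ≤ Cw := le_trans (le_abs_self _) (hCw x)
        have h1 : g x ≤ Cw - C * ‖x - z‖ := by
          have := hφlb x; simp only [hg]; linarith
        have h2 : g z ≤ g x₀ := hmax (by simp [hR])
        have hgz : g z = u z - C * δ := by
          simp only [hg, hφ, hq, sub_self, norm_zero]
          rw [show (0:ℝ) ^ 2 + δ ^ 2 = δ ^ 2 by ring, Real.sqrt_sq hδpos.le]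
          ring
        have hlbz : -Cw ≤ u z := (abs_le.mp (hCw z)).1
        have h3 : (2 * Cw + C * δ) / C ≤ R := le_max_left _ _
        have h4 : (2 * Cw + C * δ) / C < ‖x - z‖ := by
          rw [← dist_eq_norm]; linarith
        have h5 : 2 * Cw + C * δ < C * ‖x - z‖ := by
          rw [div_lt_iff₀ hCpos] at h4; linarith
        rw [hgz] at h2; linarith
    set s := Real.sqrt (q x₀ + δ ^ 2) with hs
    have hqpos : 0 < q x₀ + δ ^ 2 := by have := hq0 x₀; nlinarith
    have hspos : 0 < s := Real.sqrt_pos.mpr hqpos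
    -- derivative of q at x₀
    have hid : HasFDerivAt (fun x : Euc N => x - z) (ContinuousLinearMap.id ℝ (Euc N)) x₀ :=
      (hasFDerivAt_id x₀).sub_const z
    have hinner := hid.inner ℝ hid
    set Dq := ((fderivInnerCLM ℝ ((x₀ - z : Euc N), (x₀ - z : Euc N))).comp
      (((ContinuousLinearMap.id ℝ (Euc N))).prod (ContinuousLinearMap.id ℝ (Euc N)))) with hDq
    have hqd : HasFDerivAt q Dq x₀ := by
      have hfe : (fun x : Euc N => (inner ℝ (x - z) (x - z) : ℝ)) = q :=
        funext fun x => real_inner_self_eq_norm_sq _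
      rw [← hfe]
      exact hinner
    have hDqv : ∀ v, Dq v = 2 * ⟪x₀ - z, v⟫ := by
      intro v
      simp only [hDq, ContinuousLinearMap.comp_apply, ContinuousLinearMap.prod_apply,
        ContinuousLinearMap.id_apply, fderivInnerCLM_apply]
      rw [real_inner_comm v (x₀ - z)]; ring
    have hq₀ : q x₀ + δ ^ 2 ≠ 0 := ne_of_gt hqpos
    have hsqd : HasFDerivAt (fun x => Real.sqrt (q x + δ ^ 2)) ((1 / (2 * s)) • Dq) x₀ :=
      (hqd.add_const (δ ^ 2)).sqrt hq₀
    have hφd : HasFDerivAt φ (C • ((1 / (2 * s)) • Dq) + δ • Dq) x₀ :=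
      (hsqd.const_mul C).add (hqd.const_mul δ)
    set p := (C / s + 2 * δ) • (x₀ - z) with hp
    have hLv : ∀ v, (C • ((1 / (2 * s)) • Dq) + δ • Dq) v = ⟪p, v⟫ := by
      intro v
      have h1 := hDqv v
      simp only [ContinuousLinearMap.add_apply, ContinuousLinearMap.coe_smul',
        Pi.smul_apply, smul_eq_mul, h1, hp, real_inner_smul_left]
      field_simp
    have hsd : InSuperDiff u x₀ p := superdiff_of_max u φ x₀ p _ hφd hLv hmax
    have hpκ : ‖p‖ ≤ κ := hbd x₀ p hsd
    set r := ‖x₀ - z‖ with hr2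
    have hr2nn : 0 ≤ r := norm_nonneg _
    have hcoef : 0 ≤ C / s + 2 * δ := by positivity
    have hpnorm : ‖p‖ = (C / s + 2 * δ) * r := by
      rw [hp, norm_smul, Real.norm_eq_abs, abs_of_nonneg hcoef]
    have hrs : C * r ≤ κ * s := by
      have h1 : (C / s) * r ≤ ‖p‖ := by
        rw [hpnorm]; nlinarith
      have h2 : (C / s) * r ≤ κ := le_trans h1 hpκ
      rw [div_mul_eq_mul_div, div_le_iff₀ hspos] at h2
      linarith
    have hs2 : s ^ 2 = r ^ 2 + δ ^ 2 := by
      rw [hs, Real.sq_sqrt hqpos.le]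
    have hrκδ : r ≤ κ * δ := by
      have harith : ∀ s' r' : ℝ, 0 < s' → 0 ≤ r' → (κ + 1) * r' ≤ κ * s' →
          s' ^ 2 = r' ^ 2 + δ ^ 2 → r' ≤ κ * δ := by
        intro s' r' h1 h2 h3 h4
        have h5 : ((κ + 1) * r') ^ 2 ≤ (κ * s') ^ 2 := by
          have h6 : 0 ≤ (κ + 1) * r' := by positivity
          nlinarith
        have h7 : (2 * κ + 1) * r' ^ 2 ≤ κ ^ 2 * δ ^ 2 := by nlinarith
        nlinarith [sq_nonneg (r' - κ * δ), sq_nonneg (r' + κ * δ), mul_nonneg hκ hδpos.le]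
      exact harith s r hspos hr2nn (by simpa only [hCdef] using hrs) hs2
    have hcont₀ : u x₀ ≤ u z + ε := by
      have hκδ₁ : κ * δ < δ₁ := by
        have h1 : κ * δ ≤ κ * (δ₁ / (κ + 1)) :=
          mul_le_mul_of_nonneg_left (min_le_left _ _) hκ
        have h2 : κ * (δ₁ / (κ + 1)) < δ₁ := by
          have e : (κ + 1) * (δ₁ / (κ + 1)) = δ₁ := by field_simp
          have hlt : κ * (δ₁ / (κ + 1)) < (κ + 1) * (δ₁ / (κ + 1)) :=
            mul_lt_mul_of_pos_right (by linarith) (div_pos hδ₁ (by linarith))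
          linarith
        linarith
      have hdist : dist x₀ z < δ₁ := by
        rw [dist_eq_norm]; calc ‖x₀ - z‖ = r := rfl
          _ ≤ κ * δ := hrκδ
          _ < δ₁ := hκδ₁
      have := hcont x₀ hdist
      rw [Real.dist_eq] at this
      have := (abs_lt.mp this).2
      linarith
    have hgy : g y ≤ g x₀ := hmax y
    have hφub : φ y ≤ C * ‖y - z‖ + C * δ + δ * ‖y - z‖ ^ 2 := by
      have h1 : Real.sqrt (‖y - z‖ ^ 2 + δ ^ 2) ≤ ‖y - z‖ + δ := by
        have h2 : ‖y - z‖ ^ 2 + δ ^ 2 ≤ (‖y - z‖ + δ) ^ 2 := by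
          nlinarith [norm_nonneg (y - z), hδpos.le]
        calc Real.sqrt (‖y - z‖ ^ 2 + δ ^ 2) ≤ Real.sqrt ((‖y - z‖ + δ) ^ 2) :=
              Real.sqrt_le_sqrt h2
          _ = ‖y - z‖ + δ := Real.sqrt_sq (by positivity)
      have h3 : C * Real.sqrt (‖y - z‖ ^ 2 + δ ^ 2) ≤ C * (‖y - z‖ + δ) :=
        mul_le_mul_of_nonneg_left h1 hCpos.le
      have h4 : C * (‖y - z‖ + δ) = C * ‖y - z‖ + C * δ := by ring
      rw [h4] at h3
      simp only [hφ, hq]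
      linarith
    have hφx₀ : 0 ≤ φ x₀ := hφnonneg x₀
    have hδε : δ ≤ ε := min_le_right _ _
    have hCδ : C * δ ≤ C * ε := mul_le_mul_of_nonneg_left hδε hCpos.le
    have hδsq : δ * ‖y - z‖ ^ 2 ≤ ε * ‖y - z‖ ^ 2 := mul_le_mul_of_nonneg_right hδε (sq_nonneg _)
    simp only [hg] at hgy
    linarith
  by_contra hcon
  push_neg at hcon
  have hgap : 0 < u y - u z - C * ‖y - z‖ := by linarith
  have hε2 : 0 < (u y - u z - C * ‖y - z‖) / (2 * (1 + C + ‖y - z‖ ^ 2)) :=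
    div_pos hgap (by linarith)
  have hkey := key _ hε2
  have he : (u y - u z - C * ‖y - z‖) / (2 * (1 + C + ‖y - z‖ ^ 2)) * (1 + C + ‖y - z‖ ^ 2)
      = (u y - u z - C * ‖y - z‖) / 2 := by
    field_simp
  rw [he] at hkey
  linarith

end Lip
section Superlinear

/-- From superlinearity: sublevel sets of `α` are bounded. -/
lemma exists_kappa (α : ℝ → ℝ) (hα' : Filter.Tendsto (fun h => α h / h) atTop atTop) (c' : ℝ) :
    ∃ κ, 0 ≤ κ ∧ ∀ h : ℝ, 0 ≤ h → α h ≤ c' → h ≤ κ := by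
  obtain ⟨R, hR⟩ := Filter.eventually_atTop.mp (hα'.eventually_ge_atTop (|c'| + 1))
  refine ⟨max R 1, le_trans zero_le_one (le_max_right _ _), fun h hh hαh => ?_⟩
  by_contra hcon
  push_neg at hcon
  have h1 : 1 < h := lt_of_le_of_lt (le_max_right R 1) hcon
  have h2 : R ≤ h := le_trans (le_max_left R 1) hcon.le
  have h3 := hR h h2
  have h4 : (|c'| + 1) * h ≤ α h := (le_div_iff₀ (by linarith)).mp h3
  nlinarith [abs_nonneg c', le_abs_self c']

/-- The Hamiltonians are uniformly bounded below. -/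
lemma exists_H_lb {N m : ℕ} (hm : 1 ≤ m) (H : Fin m → Euc N → Euc N → ℝ)
    (hcont : ∀ i, Continuous fun q : Euc N × Euc N => H i q.1 q.2)
    (hper : ∀ i p, ZPeriodic fun x => H i x p)
    (α : ℝ → ℝ) (hαle : ∀ i x p, α ‖p‖ ≤ H i x p)
    (hα' : Filter.Tendsto (fun h => α h / h) atTop atTop) :
    ∃ h₀ : ℝ, ∀ i x p, h₀ ≤ H i x p := by
  obtain ⟨R, hR⟩ := Filter.eventually_atTop.mp (hα'.eventually_ge_atTop 1)
  set R₁ := max R 1 with hR₁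
  have hR₁nn : (0:ℝ) ≤ R₁ := le_trans zero_le_one (le_max_right _ _)
  have key : ∀ i : Fin m, ∃ b, ∀ x p, b ≤ H i x p := by
    intro i
    set K : Set (Euc N × Euc N) :=
      Metric.closedBall 0 (Real.sqrt N) ×ˢ Metric.closedBall 0 R₁ with hK
    have hKc : IsCompact K := (isCompact_closedBall _ _).prod (isCompact_closedBall _ _)
    have hKne : K.Nonempty :=
      ⟨(0, 0), Set.mem_prod.mpr ⟨by simp [Real.sqrt_nonneg], by simp [hR₁nn]⟩⟩
    obtain ⟨q₀, hq₀K, hq₀⟩ := hKc.exists_isMinOn hKne (hcont i).continuousOn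
    refine ⟨min (H i q₀.1 q₀.2) 0, fun x p => ?_⟩
    by_cases hp : ‖p‖ ≤ R₁
    · obtain ⟨k, hk⟩ := exists_rep x
      have hper' : H i (x + intVec k) p = H i x p := hper i p x k
      have hmem : ((x + intVec k), p) ∈ K := by
        refine Set.mem_prod.mpr ⟨?_, ?_⟩
        · simpa [Metric.mem_closedBall, dist_eq_norm] using hk
        · simpa [Metric.mem_closedBall, dist_eq_norm] using hp
      have hmin : H i q₀.1 q₀.2 ≤ H i (x + intVec k) p := hq₀ hmem
      rw [hper'] at hmin
      exact le_trans (min_le_left _ _) hmin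
    · push_neg at hp
      have h1 : R ≤ ‖p‖ := le_trans (le_max_left _ _) hp.le
      have h2 : (1:ℝ) ≤ ‖p‖ := le_trans (le_max_right _ _) hp.le
      have h3 := hR ‖p‖ h1
      have h4 : 1 * ‖p‖ ≤ α ‖p‖ := (le_div_iff₀ (by linarith)).mp h3
      have h5 := hαle i x p
      exact le_trans (min_le_right _ _) (by linarith)
  choose b hb using key
  have hmne : (Finset.univ : Finset (Fin m)).Nonempty := ⟨⟨0, hm⟩, Finset.mem_univ _⟩
  exact ⟨Finset.univ.inf' hmne b, fun i x p =>
    le_trans (Finset.inf'_le b (Finset.mem_univ i)) (hb i x p)⟩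

end Superlinear

section Spread

/-- The key matrix lemma: if all the "coupling sums" are bounded above, then the
components are uniformly close to each other. -/
lemma spread_bound {m : ℕ} (B : Matrix (Fin m) (Fin m) ℝ)
    (hoff : ∀ i j, i ≠ j → B i j ≤ 0) (hrow : ∀ i, ∑ j, B i j = 0)
    (hirr : ∀ I : Finset (Fin m), I.Nonempty → I ≠ Finset.univ →
      ∃ i ∈ I, ∃ j, j ∉ I ∧ B i j ≠ 0)
    (C₀ : ℝ) (hC₀ : 0 ≤ C₀) :
    ∃ Cs, 0 ≤ Cs ∧ ∀ a : Fin m → ℝ,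
      (∀ i, ∑ j, B i j * a j ≤ C₀) → ∀ i j, a i - a j ≤ Cs := by
  classical
  have hdiag : ∀ i, 0 ≤ B i i := by
    intro i
    have h1 : B i i + ∑ j ∈ Finset.univ.erase i, B i j = ∑ j, B i j :=
      Finset.add_sum_erase _ _ (Finset.mem_univ i)
    have h2 : ∑ j ∈ Finset.univ.erase i, B i j ≤ 0 := by
      apply Finset.sum_nonpos
      intro j hj
      exact hoff i j (Ne.symm (Finset.mem_erase.mp hj).1)
    rw [hrow i] at h1
    linarith
  by_cases hm1 : ∀ i j : Fin m, i = j
  · exact ⟨0, le_refl _, fun a ha i j => by rw [hm1 i j]; simp⟩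
  push_neg at hm1
  obtain ⟨i₀', j₀', hij₀⟩ := hm1
  have hne' : Nonempty (Fin m) := ⟨i₀'⟩
  set S : Finset (Fin m × Fin m) :=
    Finset.univ.filter (fun ij => ij.1 ≠ ij.2 ∧ B ij.1 ij.2 ≠ 0) with hS
  have hSne : S.Nonempty := by
    obtain ⟨i, hi, j, hj, hBij⟩ := hirr {i₀'} ⟨i₀', Finset.mem_singleton_self _⟩ (by
      intro hcon
      have : j₀' ∈ ({i₀'} : Finset (Fin m)) := hcon ▸ Finset.mem_univ _
      exact hij₀ (Finset.mem_singleton.mp this).symm)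
    refine ⟨(i, j), Finset.mem_filter.mpr ⟨Finset.mem_univ _, ?_, hBij⟩⟩
    show i ≠ j
    intro h
    exact hj (h ▸ hi)
  set bm := S.inf' hSne (fun ij => -B ij.1 ij.2) with hbm
  have hbmpos : 0 < bm := by
    rw [hbm, Finset.lt_inf'_iff]
    intro ij hij
    obtain ⟨-, hne, hB0⟩ := Finset.mem_filter.mp hij
    have h1 := hoff ij.1 ij.2 hne
    have h2 : B ij.1 ij.2 < 0 := lt_of_le_of_ne h1 hB0
    linarith
  set βm := Finset.univ.sup' Finset.univ_nonempty (fun i => B i i) with hβm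
  have hβmle : ∀ i, B i i ≤ βm := by
    intro i
    rw [hβm]
    exact Finset.le_sup' (fun l => B l l) (Finset.mem_univ i)
  have hβm0 : 0 ≤ βm := le_trans (hdiag i₀') (hβmle i₀')
  set T : ℕ → ℝ := fun k => Nat.rec (motive := fun _ => ℝ) 0
    (fun _ t => t + (C₀ + βm * t) / bm) k with hT
  have hT0 : T 0 = 0 := rfl
  have hTsucc : ∀ k, T (k + 1) = T k + (C₀ + βm * T k) / bm := fun k => rfl
  have hTnn : ∀ k, 0 ≤ T k := by
    intro k
    induction k with
    | zero => exact le_of_eq hT0.symm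
    | succ k ih =>
      rw [hTsucc]
      have : 0 ≤ (C₀ + βm * T k) / bm := div_nonneg (by nlinarith) hbmpos.le
      linarith
  have hTmono : ∀ k, T k ≤ T (k + 1) := by
    intro k
    rw [hTsucc]
    have : 0 ≤ (C₀ + βm * T k) / bm := div_nonneg (by nlinarith [hTnn k]) hbmpos.le
    linarith
  refine ⟨T m, hTnn m, fun a ha i j => ?_⟩
  obtain ⟨i₀, hi₀⟩ : ∃ i₀, ∀ l, a l ≤ a i₀ := Finite.exists_max a
  have hstep : ∀ (i' j' : Fin m) (t : ℝ), 0 ≤ t → i' ≠ j' → B i' j' ≠ 0 →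
      a i₀ - t ≤ a i' → a i₀ - (t + (C₀ + βm * t) / bm) ≤ a j' := by
    intro i' j' t ht hne hB0 hai
    have h1 : ∑ l, B i' l * (a l - a i') ≤ C₀ := by
      have h2 := ha i'
      have h3 : ∑ l, B i' l * (a l - a i') = ∑ l, B i' l * a l - (∑ l, B i' l) * a i' := by
        rw [Finset.sum_mul, ← Finset.sum_sub_distrib]
        apply Finset.sum_congr rfl
        intro l _
        ring
      rw [h3, hrow i']
      simp only [zero_mul, sub_zero]
      exact h2
    set s2 := (Finset.univ.erase j').erase i' with hs2
    have hi'mem : i' ∈ Finset.univ.erase j' := Finset.mem_erase.mpr ⟨hne, Finset.mem_univ _⟩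
    have hsplit : B i' j' * (a j' - a i') +
        (B i' i' * (a i' - a i') + ∑ l ∈ s2, B i' l * (a l - a i'))
        = ∑ l, B i' l * (a l - a i') := by
      rw [Finset.add_sum_erase _ (fun l => B i' l * (a l - a i')) hi'mem]
      exact Finset.add_sum_erase _ (fun l => B i' l * (a l - a i')) (Finset.mem_univ j')
    have hzero : B i' i' * (a i' - a i') = 0 := by ring
    have hcoef : ∑ l ∈ s2, B i' l = -B i' j' - B i' i' := by
      have h5 : B i' j' + (B i' i' + ∑ l ∈ s2, B i' l) = ∑ l, B i' l := by
        rw [Finset.add_sum_erase _ (fun l => B i' l) hi'mem]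
        exact Finset.add_sum_erase _ (fun l => B i' l) (Finset.mem_univ j')
      rw [hrow i'] at h5
      linarith
    have hterm : ∀ l ∈ s2, B i' l * t ≤ B i' l * (a l - a i') := by
      intro l hl
      have hlne : l ≠ i' := (Finset.mem_erase.mp hl).1
      have hBle : B i' l ≤ 0 := hoff i' l (Ne.symm hlne)
      have hub : a l - a i' ≤ t := by
        have := hi₀ l
        linarith
      exact mul_le_mul_of_nonpos_left hub hBle
    have hsum2 : (∑ l ∈ s2, B i' l) * t ≤ ∑ l ∈ s2, B i' l * (a l - a i') := by
      rw [Finset.sum_mul]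
      exact Finset.sum_le_sum hterm
    have h6 : B i' j' * (a j' - a i') ≤ C₀ + βm * t := by
      have h7 : (-B i' j' - B i' i') * t ≤ ∑ l ∈ s2, B i' l * (a l - a i') := by
        rw [← hcoef]; exact hsum2
      have h8 : -βm * t ≤ (-B i' j' - B i' i') * t := by
        have hb1 : B i' j' ≤ 0 := hoff _ _ hne
        have hb2 : B i' i' ≤ βm := hβmle i'
        nlinarith
      linarith [hsplit, h1]
    have hBge : bm ≤ -B i' j' := by
      have hmem : (i', j') ∈ S := Finset.mem_filter.mpr ⟨Finset.mem_univ _, hne, hB0⟩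
      exact Finset.inf'_le _ hmem
    have hnum : 0 ≤ C₀ + βm * t := by nlinarith
    have h9 : a i' - a j' ≤ (C₀ + βm * t) / bm := by
      by_cases hsgn : 0 ≤ a i' - a j'
      · have h10 : bm * (a i' - a j') ≤ (-B i' j') * (a i' - a j') :=
          mul_le_mul_of_nonneg_right hBge hsgn
        have h11 : (-B i' j') * (a i' - a j') = B i' j' * (a j' - a i') := by ring
        rw [le_div_iff₀ hbmpos]
        nlinarith
      · push_neg at hsgn
        have := div_nonneg hnum hbmpos.le
        linarith
    linarith
  have hInd : ∀ k : ℕ, ∃ I : Finset (Fin m), I.Nonempty ∧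
      (∀ l ∈ I, a i₀ - T k ≤ a l) ∧ (k + 1 ≤ I.card ∨ I = Finset.univ) := by
    intro k
    induction k with
    | zero =>
      refine ⟨{i₀}, ⟨i₀, Finset.mem_singleton_self _⟩, ?_, Or.inl (by simp)⟩
      intro l hl
      have h := Finset.mem_singleton.mp hl
      subst h
      rw [hT0]
      linarith
    | succ k ih =>
      obtain ⟨I, hIne, hIbd, hIcard⟩ := ih
      by_cases hIu : I = Finset.univ
      · exact ⟨I, hIne, fun l hl => le_trans (by linarith [hTmono k]) (hIbd l hl), Or.inr hIu⟩
      · obtain ⟨i', hi'I, j', hj'I, hB0⟩ := hirr I hIne hIu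
        have hne : i' ≠ j' := fun h => hj'I (h ▸ hi'I)
        have hstep' := hstep i' j' (T k) (hTnn k) hne hB0 (hIbd i' hi'I)
        refine ⟨insert j' I, ⟨j', Finset.mem_insert_self _ _⟩, ?_, ?_⟩
        · intro l hl
          rcases Finset.mem_insert.mp hl with h | h
          · subst h
            rw [hTsucc k]
            exact hstep'
          · exact le_trans (by linarith [hTmono k]) (hIbd l h)
        · left
          rw [Finset.card_insert_of_notMem hj'I]
          rcases hIcard with h | h
          · omega
          · exact absurd h hIu
  obtain ⟨I, hIne, hIbd, hIcard⟩ := hInd m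
  have hIu : I = Finset.univ := by
    rcases hIcard with h | h
    · exfalso
      have h1 : I.card ≤ m := by simpa using Finset.card_le_univ I
      omega
    · exact h
  have hj := hIbd j (hIu ▸ Finset.mem_univ j)
  have hile := hi₀ i
  linarith

end Spread
section Coupling

/-- For a viscosity subsolution, the coupling term is bounded above everywhere. -/
lemma subsol_coupling_bound {N m : ℕ} (H : Fin m → Euc N → Euc N → ℝ)
    (B : Matrix (Fin m) (Fin m) ℝ) (c h₀ : ℝ) (hH0 : ∀ i x p, h₀ ≤ H i x p)
    (w : Fin m → Euc N → ℝ) (hw : IsSubsol H B 0 c w) :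
    ∀ i x, ∑ j, B i j * w j x ≤ c - h₀ := by
  obtain ⟨hwc, hwp, hsub⟩ := hw
  intro i x
  have hGc : Continuous fun y => ∑ j, B i j * w j y := by
    apply continuous_finset_sum
    intro j _
    exact continuous_const.mul (hwc j)
  obtain ⟨Cw, hCw0, hCw⟩ := bdd_of_periodic (w i) (hwc i) (hwp i)
  refine le_of_forall_pos_le_add ?_
  intro ε hε
  obtain ⟨r, hr, hcont⟩ := Metric.continuous_iff.mp hGc x ε hε
  obtain ⟨y, p, hyx, hyp⟩ := dense_superdiff (w i) (hwc i) Cw hCw x r hr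
  have h1 := hsub y i p hyp
  have h2 : (B.mulVec fun j => w j y) i = ∑ j, B i j * w j y := by
    simp [Matrix.mulVec, dotProduct]
  rw [h2] at h1
  have h3 := hH0 i y p
  have h4 : ∑ j, B i j * w j y ≤ c - h₀ := by
    have h0m : (0:ℝ) * w i y = 0 := zero_mul _
    linarith
  have h5 := hcont y hyx
  rw [Real.dist_eq] at h5
  linarith [(abs_lt.mp h5).1]

/-- Integrability of the evaluation map against any probability measure. -/
lemma integrable_eval {N m : ℕ} (w : Fin m → Euc N → ℝ) (hwc : ∀ i, Continuous (w i))
    (CW : ℝ) (hCW : ∀ j y, |w j y| ≤ CW) (μ : MeasureTheory.Measure (Phase N m))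
    [IsProbabilityMeasure μ] :
    Integrable (fun z : Phase N m => w z.2.2 z.1) μ := by
  have hfe : (fun z : Phase N m => w z.2.2 z.1)
      = fun z => ∑ j, if z.2.2 = j then w j z.1 else 0 := by
    funext z
    simp
  rw [hfe]
  apply integrable_finset_sum
  intro j _
  have hmeas : MeasurableSet {z : Phase N m | z.2.2 = j} := by
    have hm : Measurable fun z : Phase N m => z.2.2 := measurable_snd.comp measurable_snd
    exact hm (measurableSet_singleton j)
  have hcont : Continuous fun z : Phase N m => w j z.1 := (hwc j).comp continuous_fst
  have hint : Integrable (fun z : Phase N m => w j z.1) μ := by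
    apply Integrable.mono' (integrable_const CW) hcont.aestronglyMeasurable
    filter_upwards with z
    rw [Real.norm_eq_abs]
    exact hCW j z.1
  have hind := hint.indicator hmeas
  apply hind.congr
  filter_upwards with z
  by_cases h : z.2.2 = j <;> simp [Set.indicator_apply, h]

end Coupling
/-- If there exists a Mather measure, then the family `𝓕` is uniformly bounded from above. -/
theorem Fam_uniformly_bounded_above
    {N m : ℕ} (hN : 1 ≤ N) (hm : 1 ≤ m)
    (H : Fin m → Euc N → Euc N → ℝ) (B : Matrix (Fin m) (Fin m) ℝ) (α β : ℝ → ℝ)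
    (hst : Standing H B α β)
    (hα' : Tendsto (fun h => α h / h) atTop atTop)
    (hβ' : Tendsto (fun h => β h / h) atTop atTop)
    (hsub : ∃ u : Fin m → Euc N → ℝ, IsSubsol H B 0 (critVal H B) u)
    (hMather : ∃ μ : Measure (Phase N m), IsMather H B μ) :
    ∀ (x : Euc N) (i : Fin m), BddAbove {r : ℝ | ∃ w ∈ Fam H B, r = w i x} := by
  intro x i
  obtain ⟨μ, hμ⟩ := hMather
  obtain ⟨hHc, hHper, hHconv, hHbd, hBoff, hBrow, hBirr⟩ := hst
  set c := critVal H B with hc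
  obtain ⟨h₀, hh₀⟩ := exists_H_lb hm H hHc hHper α (fun i x p => (hHbd i x p).1) hα'
  set C₀ := max (c - h₀) 0 with hC₀def
  obtain ⟨Cs, hCs0, hCs⟩ := spread_bound B hBoff hBrow hBirr C₀ (le_max_right _ _)
  have hne' : Nonempty (Fin m) := ⟨⟨0, hm⟩⟩
  set βm := Finset.univ.sup' Finset.univ_nonempty (fun l : Fin m => B l l) with hβm
  have hβmle : ∀ j, B j j ≤ βm := by
    intro j
    rw [hβm]
    exact Finset.le_sup' (fun l => B l l) (Finset.mem_univ j)
  obtain ⟨κ, hκ0, hκ⟩ := exists_kappa α hα' (c + βm * Cs)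
  refine ⟨Cs + (κ + 1) * Real.sqrt N, ?_⟩
  rintro r ⟨w, hwF, rfl⟩
  obtain ⟨hwsub, hwμ⟩ := hwF
  obtain ⟨hwc, hwp, hsub'⟩ := hwsub
  have hwsub' : IsSubsol H B 0 c w := ⟨hwc, hwp, hsub'⟩
  have hcoup : ∀ i' x', ∑ j, B i' j * w j x' ≤ C₀ := fun i' x' =>
    le_trans (subsol_coupling_bound H B c h₀ hh₀ w hwsub' i' x') (le_max_left _ _)
  have hspr : ∀ x' i' j', w i' x' - w j' x' ≤ Cs := fun x' i' j' =>
    hCs (fun l => w l x') (fun i'' => hcoup i'' x') i' j'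
  have hpbd : ∀ j : Fin m, ∀ x' p, InSuperDiff (w j) x' p → ‖p‖ ≤ κ := by
    intro j x' p hp
    have h1 := hsub' x' j p hp
    have h2 : (B.mulVec fun l => w l x') j = ∑ l, B j l * w l x' := by
      simp [Matrix.mulVec, dotProduct]
    rw [h2] at h1
    have h3 : -(βm * Cs) ≤ ∑ l, B j l * w l x' := by
      have h5 : ∀ l ∈ Finset.univ.erase j, B j l * Cs ≤ B j l * (w l x' - w j x') := by
        intro l hl
        exact mul_le_mul_of_nonpos_left (hspr x' l j)
          (hBoff j l (Ne.symm (Finset.mem_erase.mp hl).1))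
      have h6 : ∑ l ∈ Finset.univ.erase j, B j l = -B j j := by
        have h6a := Finset.add_sum_erase Finset.univ (fun l => B j l) (Finset.mem_univ j)
        have h6b := hBrow j
        linarith
      have h7 : ∑ l, B j l * (w l x' - w j x')
          = B j j * (w j x' - w j x') + ∑ l ∈ Finset.univ.erase j, B j l * (w l x' - w j x') :=
        (Finset.add_sum_erase _ (fun l => B j l * (w l x' - w j x')) (Finset.mem_univ j)).symm
      have h8 : (∑ l ∈ Finset.univ.erase j, B j l) * Cs
          ≤ ∑ l ∈ Finset.univ.erase j, B j l * (w l x' - w j x') := by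
        rw [Finset.sum_mul]
        exact Finset.sum_le_sum h5
      have h9 : -(βm * Cs) ≤ (∑ l ∈ Finset.univ.erase j, B j l) * Cs := by
        rw [h6]
        nlinarith [hβmle j, hCs0]
      have h4 : ∑ l, B j l * (w l x' - w j x') = ∑ l, B j l * w l x' := by
        have h4a : ∑ l, B j l * (w l x' - w j x')
            = ∑ l, B j l * w l x' - (∑ l, B j l) * w j x' := by
          rw [Finset.sum_mul, ← Finset.sum_sub_distrib]
          exact Finset.sum_congr rfl fun l _ => by ring
        rw [h4a, hBrow j]
        ring
      have hz : B j j * (w j x' - w j x') = 0 := by ring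
      linarith
    have hHle : H j x' p ≤ c + βm * Cs := by
      have h0m : (0:ℝ) * w j x' = 0 := zero_mul _
      linarith
    exact hκ ‖p‖ (norm_nonneg p) (le_trans (hHbd j x' p).1 hHle)
  have hlow : ∀ (jz : Fin m) (y : Euc N), w i x - Cs - (κ + 1) * Real.sqrt N ≤ w jz y := by
    intro jz y
    obtain ⟨Cwi, hCwi0, hCwi⟩ := bdd_of_periodic (w i) (hwc i) (hwp i)
    have hlip := lip_of_superdiff_bound (w i) (hwc i) Cwi hCwi κ hκ0 (hpbd i)
    obtain ⟨k, hk⟩ := exists_close_rep x y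
    have h1 := hlip x (y + intVec k)
    have h2 : w i (y + intVec k) = w i y := hwp i y k
    have h3 : ‖x - (y + intVec k)‖ ≤ Real.sqrt N := by
      rw [norm_sub_rev]
      exact hk
    have h4 : (κ + 1) * ‖x - (y + intVec k)‖ ≤ (κ + 1) * Real.sqrt N :=
      mul_le_mul_of_nonneg_left h3 (by linarith)
    rw [h2] at h1
    have h5 := hspr y i jz
    linarith
  have hCwall : ∃ CW, ∀ j y, |w j y| ≤ CW := by
    have hall : ∀ j : Fin m, ∃ C, 0 ≤ C ∧ ∀ y, |w j y| ≤ C := fun j =>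
      bdd_of_periodic (w j) (hwc j) (hwp j)
    choose f hf using hall
    exact ⟨Finset.univ.sup' Finset.univ_nonempty f, fun j y =>
      le_trans ((hf j).2 y) (Finset.le_sup' f (Finset.mem_univ j))⟩
  obtain ⟨CW, hCW⟩ := hCwall
  haveI : IsProbabilityMeasure μ := hμ.1.1
  have hint : Integrable (fun z : Phase N m => w z.2.2 z.1) μ :=
    integrable_eval w hwc CW hCW μ
  have hmono : (fun _ : Phase N m => w i x - Cs - (κ + 1) * Real.sqrt N)
      ≤ fun z : Phase N m => w z.2.2 z.1 := fun z => hlow z.2.2 z.1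
  have h1 : ∫ _ : Phase N m, (w i x - Cs - (κ + 1) * Real.sqrt N) ∂μ
      ≤ ∫ z : Phase N m, w z.2.2 z.1 ∂μ :=
    integral_mono (integrable_const _) hint hmono
  rw [integral_const] at h1
  simp only [probReal_univ, measure_univ, ENNReal.toReal_one, one_smul, smul_eq_mul, one_mul] at h1
  have h2 := hwμ μ hμ
  linarith
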